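/- Let (G,τ) be a topological abelian group, φ: (G,τ) → (G,τ) a continuous endomorphism and H a φ-invariant open finite-index subgroup of G. Then ent*_τ(φ) = ent*_{τ|_H}(φ|_H). -/

import Mathlib

/-!
Restriction to `H` sends an open finite-index subgroup `N` of `G` to `N ∩ H`, and every open
finite-index subgroup of `H` is of this form. For the restricted endomorphism, `B_n(φ|_H, N ∩ H)`
is `B_n(φ, N) ∩ H`, whose index in `H` lies between `[G : B_n(φ, N)] / [G : H]` and
`[G : B_n(φ, N)]`. The logarithms of the two indices therefore differ by at most `log [G : H]`,
which disappears after dividing by `n`, so `H*` is unchanged and the two suprema agree.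
-/

open Filter Topology ENNReal

variable {G : Type*} [AddCommGroup G]

/-- `B_n(φ,N) = N ∩ φ⁻¹(N) ∩ … ∩ φ^{-(n-1)}(N)`. -/
noncomputable def Bsub (φ : AddMonoid.End G) (N : AddSubgroup G) (n : ℕ) : AddSubgroup G :=
  ⨅ i ∈ Finset.range n, N.comap (φ ^ i : AddMonoid.End G)

/-- `H*(φ,N) = lim_n log|G/B_n(φ,N)|/n`. -/
noncomputable def Hstar (φ : AddMonoid.End G) (N : AddSubgroup G) : ℝ :=
  limUnder atTop fun n : ℕ => Real.log ((Bsub φ N n).index) / n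

/-- The topological adjoint entropy: sup of `H*(φ,N)` over `τ`-open finite-index subgroups. -/
noncomputable def entStar (t : TopologicalSpace G) (φ : AddMonoid.End G) : ℝ≥0∞ :=
  ⨆ (N : AddSubgroup G) (_ : @IsOpen G t ↑N ∧ N.FiniteIndex), ENNReal.ofReal (Hstar φ N)

lemma limUnder_eq_of_tendsto_sub_nhds_zero {α E : Type*} {l : Filter α} [TopologicalSpace E]
    [AddCommGroup E] [IsTopologicalAddGroup E] [Nonempty E] {u v : α → E}
    (h : Tendsto (fun n => u n - v n) l (𝓝 0)) :
    limUnder l u = limUnder l v := by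
  have key (a : E) : Tendsto u l (𝓝 a) ↔ Tendsto v l (𝓝 a) :=
    ⟨fun hu => by simpa using hu.sub h, fun hv => by simpa using h.add hv⟩
  simp only [limUnder, lim]
  exact congrArg _ (funext fun a => propext (key a))

lemma Real.abs_log_sub_log_le_log {a b c : ℝ} (ha : 0 < a) (hab : a ≤ b) (hb : b ≤ a * c) :
    |Real.log b - Real.log a| ≤ Real.log c := by
  have hc : 0 < c := pos_of_mul_pos_right (ha.trans_le (hab.trans hb)) ha.le
  have hlog_le := Real.log_le_log (ha.trans_le hab) hb
  rw [Real.log_mul ha.ne' hc.ne'] at hlog_le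
  rw [abs_of_nonneg (sub_nonneg.2 (Real.log_le_log ha hab))]
  linarith

lemma tendsto_log_div_sub_log_div_of_le_mul {a b : ℕ → ℕ} {c : ℕ} (ha : ∀ n, a n ≠ 0)
    (hab : ∀ n, a n ≤ b n) (hb : ∀ n, b n ≤ a n * c) :
    Tendsto (fun n : ℕ => Real.log (b n) / n - Real.log (a n) / n) atTop (𝓝 0) := by
  refine squeeze_zero_norm (fun n => ?_) (tendsto_const_div_atTop_nhds_zero_nat (Real.log c))
  rw [div_sub_div_same, Real.norm_eq_abs, abs_div, Nat.abs_cast]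
  gcongr
  exact Real.abs_log_sub_log_le_log (by exact_mod_cast (ha n).bot_lt) (by exact_mod_cast hab n)
    (by exact_mod_cast hb n)

namespace AddSubgroup

variable {A : Type*} [AddGroup A]

lemma relIndex_le_index (B H : AddSubgroup A) [B.FiniteIndex] : B.relIndex H ≤ B.index := by
  rw [← relIndex_top_right]
  exact relIndex_le_of_le_right le_top (by rw [relIndex_top_right]; exact FiniteIndex.index_ne_zero)

lemma index_le_relIndex_mul_index (B H : AddSubgroup A) [B.FiniteIndex] [H.FiniteIndex] :
    B.index ≤ B.relIndex H * H.index := by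
  rw [← inf_relIndex_right, relIndex_mul_index inf_le_right]
  exact index_antitone inf_le_left

lemma isOpen_map_subtype [TopologicalSpace A] {H : AddSubgroup A} (hH : IsOpen (H : Set A))
    {M : AddSubgroup H} (hM : IsOpen (M : Set H)) : IsOpen (M.map H.subtype : Set A) := by
  rw [coe_map]
  exact hH.isOpenMap_subtype_val _ hM

instance finiteIndex_map_subtype {H : AddSubgroup A} [H.FiniteIndex] (M : AddSubgroup H)
    [M.FiniteIndex] : (M.map H.subtype).FiniteIndex :=
  ⟨by
    rw [index_map_subtype]
    exact mul_ne_zero FiniteIndex.index_ne_zero FiniteIndex.index_ne_zero⟩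

instance finiteIndex_comap {A' : Type*} [AddGroup A'] (f : A' →+ A) (N : AddSubgroup A)
    [N.FiniteIndex] : (N.comap f).FiniteIndex :=
  ⟨by
    rw [index_comap]
    exact fun h => FiniteIndex.index_ne_zero (index_eq_zero_of_relIndex_eq_zero h)⟩

end AddSubgroup

lemma mem_Bsub {φ : AddMonoid.End G} {N : AddSubgroup G} {n : ℕ} {x : G} :
    x ∈ Bsub φ N n ↔ ∀ i < n, (φ ^ i) x ∈ N := by
  simp only [Bsub, AddSubgroup.mem_iInf, Finset.mem_range]
  exact Iff.rfl

instance Bsub.finiteIndex (φ : AddMonoid.End G) (N : AddSubgroup G) [N.FiniteIndex] (n : ℕ) :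
    (Bsub φ N n).FiniteIndex :=
  AddSubgroup.finiteIndex_iInf' _ fun _ _ => AddSubgroup.finiteIndex_comap _ N

section Restriction

variable {φ : AddMonoid.End G} {H : AddSubgroup G} {ψ : AddMonoid.End H}

lemma Bsub_comap_subtype (hψ : Function.Semiconj ((↑) : H → G) ψ φ) (N : AddSubgroup G)
    (n : ℕ) : Bsub ψ (N.comap H.subtype) n = (Bsub φ N n).comap H.subtype := by
  ext x
  simp only [AddSubgroup.mem_comap, mem_Bsub, AddSubgroup.coe_subtype, AddMonoid.End.coe_pow,
    (hψ.iterate_right _).eq]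

lemma Hstar_comap_subtype (hψ : Function.Semiconj ((↑) : H → G) ψ φ) [H.FiniteIndex]
    (N : AddSubgroup G) [N.FiniteIndex] : Hstar ψ (N.comap H.subtype) = Hstar φ N := by
  have hindex (n : ℕ) : (Bsub ψ (N.comap H.subtype) n).index = (Bsub φ N n).relIndex H := by
    rw [Bsub_comap_subtype hψ, AddSubgroup.index_comap, AddSubgroup.range_subtype]
  refine (limUnder_eq_of_tendsto_sub_nhds_zero ?_).symm
  exact tendsto_log_div_sub_log_div_of_le_mul (fun _ => AddSubgroup.FiniteIndex.index_ne_zero)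
    (fun n => (hindex n).symm ▸ AddSubgroup.relIndex_le_index _ H)
    (fun n => (hindex n).symm ▸ AddSubgroup.index_le_relIndex_mul_index _ H)

end Restriction

theorem stmt7_general [TopologicalSpace G]
    (φ : AddMonoid.End G)
    (H : AddSubgroup G) (hinv : ∀ x ∈ H, φ x ∈ H)
    (hopen : IsOpen (H : Set G)) (hfi : H.FiniteIndex) :
    entStar ‹TopologicalSpace G› φ
      = entStar (inferInstance : TopologicalSpace H)
          (((φ : G →+ G).comp H.subtype).codRestrict H (fun x => hinv x x.2)) := by
  have hψ : Function.Semiconj ((↑) : H → G)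
      (((φ : G →+ G).comp H.subtype).codRestrict H fun x => hinv x x.2) φ := fun _ => rfl
  unfold entStar
  refine le_antisymm (iSup₂_le fun N ⟨hN, _⟩ => ?_) (iSup₂_le fun M ⟨hM, _⟩ => ?_)
  · rw [← Hstar_comap_subtype hψ N]
    exact le_iSup₂_of_le (N.comap H.subtype)
      ⟨hN.preimage continuous_subtype_val, inferInstance⟩ le_rfl
  · rw [← AddSubgroup.comap_map_eq_self_of_injective H.subtype_injective M,
      Hstar_comap_subtype hψ]
    exact le_iSup₂_of_le (M.map H.subtype)
      ⟨AddSubgroup.isOpen_map_subtype hopen hM, inferInstance⟩ le_rfl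

theorem stmt7 [TopologicalSpace G] [IsTopologicalAddGroup G]
    (φ : AddMonoid.End G) (hφ : Continuous φ)
    (H : AddSubgroup G) (hinv : ∀ x ∈ H, φ x ∈ H)
    (hopen : IsOpen (H : Set G)) (hfi : H.FiniteIndex) :
    entStar ‹TopologicalSpace G› φ
      = entStar (inferInstance : TopologicalSpace H)
          (((φ : G →+ G).comp H.subtype).codRestrict H (fun x => hinv x x.2)) :=
  stmt7_general φ H hinv hopen hfi
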